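/- For each n with 1 ≤ n ≤ p, the chambers x₁C and x_nC lie on the same side of H_n (no point of x₁C is separated from a point of x_nC by H_n), while H_n separates x₁C and x_n s_{i_n}C. -/

import Mathlib

/-! The key fact is root positivity: if `ℓ(w s_i) > ℓ(w)` then `w·α_i` has nonnegative
coordinates. By induction on `ℓ(w)`: for a right descent `j` of `w`, write `w = w' u` with
`u ∈ ⟨s_i, s_j⟩` alternating, `ℓ(w) = ℓ(w') + ℓ(u)` and `i, j` not descents of `w'`; then
`u·α_i` is a combination of `α_i, α_j` with coefficients `sin(qπ/m)/sin(π/m) ≥ 0`, because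
`ℓ(u s_i) > ℓ(u)` forces `ℓ(u) < m(i,j)`.

For `f ∈ wC` the sign of `⟨f, v·α_i⟩ = ⟨w⁻¹f, w⁻¹v·α_i⟩` is therefore `+` if `i` is not a right
descent of `w⁻¹v` and `−` if it is. Here `x₁⁻¹ x_n s_{i_n} = s_{i₁} ⋯ s_{i_n}` is a segment of the
reduced word `s₁ ⋯ s_k`, so `x₁C` and `x_nC` are on the positive side of `H_n`, and `x_n s_{i_n}C`
on the negative side. -/

noncomputable section

namespace PaperBound

variable {B : Type} {W : Type} [Group W]

/-- The value `B(α_i, α_j)` of the canonical symmetric bilinear form on simple roots: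
`-cos (π / m i j)` if `m i j ≠ ∞` (encoded as `M i j ≠ 0`) and `-1` otherwise. -/
def cB (M : CoxeterMatrix B) (i j : B) : ℝ :=
  if M i j = 0 then -1 else - Real.cos (Real.pi / (M i j : ℝ))

/-- The canonical symmetric bilinear form on `V = B → ℝ` (coordinates in the basis of
simple roots `Δ = {α_i}`). -/
def bform [Fintype B] (M : CoxeterMatrix B) (u v : B → ℝ) : ℝ :=
  ∑ i, ∑ j, u i * v j * cB M i j

/-- The natural pairing `⟨-,-⟩ : V* × V → ℝ`, where both `V` and `V*` are modelled as
`B → ℝ` (coordinates of `V*` taken in the dual basis of `Δ`). -/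
def pair [Fintype B] (f v : B → ℝ) : ℝ := ∑ i, f i * v i

/-- The simple root `α_i ∈ V`. -/
def sroot [DecidableEq B] (i : B) : B → ℝ := Pi.single i 1

/-- `ρ` is the geometric representation of `W` on `V = B → ℝ`:
`s_i · v = v - 2 B(α_i, v) α_i`. -/
def IsGeomRep [Fintype B] [DecidableEq B] (M : CoxeterMatrix B) (cs : CoxeterSystem M W)
    (ρ : W →* (B → ℝ) ≃ₗ[ℝ] (B → ℝ)) : Prop :=
  ∀ (i : B) (v : B → ℝ), ρ (cs.simple i) v = v - (2 * bform M (sroot i) v) • sroot i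

/-- `π` is the contragredient representation of `W` on `V* = B → ℝ`:
`⟨w·f, w·v⟩ = ⟨f, v⟩`. -/
def IsContraRep [Fintype B] (ρ : W →* (B → ℝ) ≃ₗ[ℝ] (B → ℝ))
    (π : W →* (B → ℝ) ≃ₗ[ℝ] (B → ℝ)) : Prop :=
  ∀ (w : W) (f v : B → ℝ), pair (π w f) (ρ w v) = pair f v

/-- The set `Φ⁺` of positive roots: roots (elements of the orbit of the simple roots)
all of whose coordinates in the basis `Δ` are nonnegative. -/
def PhiPos [Fintype B] [DecidableEq B] (ρ : W →* (B → ℝ) ≃ₗ[ℝ] (B → ℝ)) : Set (B → ℝ) :=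
  {α | (∃ (w : W) (i : B), α = ρ w (sroot i)) ∧ ∀ j, 0 ≤ α j}

/-- The hyperplane `H_α = {f ∈ V* : ⟨f, α⟩ = 0}`. -/
def hyp [Fintype B] (α : B → ℝ) : Set (B → ℝ) := {f | pair f α = 0}

/-- The set `𝔓 = {H_α : α ∈ Φ⁺}` of hyperplanes. -/
def Planes [Fintype B] [DecidableEq B] (ρ : W →* (B → ℝ) ≃ₗ[ℝ] (B → ℝ)) :
    Set (Set (B → ℝ)) :=
  {H | ∃ α ∈ PhiPos (W := W) ρ, H = hyp α}

/-- The (open) dominant chamber `C = {f ∈ V* : ⟨f, α_i⟩ > 0 for all i}`. -/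
def domCham (B : Type) [Fintype B] [DecidableEq B] : Set (B → ℝ) :=
  {f | ∀ i : B, 0 < pair f (sroot i)}

/-- The Tits cone `U = ⋃_{w ∈ W} w · (closure of C)`. -/
def titsCone [Fintype B] [DecidableEq B] (π : W →* (B → ℝ) ≃ₗ[ℝ] (B → ℝ)) :
    Set (B → ℝ) :=
  ⋃ w : W, (π w) '' closure (domCham B)

/-- `A ⩀ B := A ∩ B ∩ U°`, where `U°` is the interior of the Tits cone. -/
def dcap [Fintype B] [DecidableEq B] (π : W →* (B → ℝ) ≃ₗ[ℝ] (B → ℝ))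
    (A A' : Set (B → ℝ)) : Set (B → ℝ) :=
  A ∩ A' ∩ interior (titsCone π)

/-- A set `𝔔` of hyperplanes is intersecting if `H₁ ⩀ H₂ ≠ ∅` for all `H₁, H₂ ∈ 𝔔`. -/
def Intersecting [Fintype B] [DecidableEq B] (π : W →* (B → ℝ) ≃ₗ[ℝ] (B → ℝ))
    (Q : Set (Set (B → ℝ))) : Prop :=
  ∀ H₁ ∈ Q, ∀ H₂ ∈ Q, (dcap π H₁ H₂).Nonempty

/-- The chamber `wC ⊆ V*`. -/
def cham [Fintype B] [DecidableEq B] (π : W →* (B → ℝ) ≃ₗ[ℝ] (B → ℝ)) (w : W) :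
    Set (B → ℝ) :=
  (π w) '' domCham B

/-- The hyperplane with root `α` separates `f, g ∈ V*`: `⟨f, α⟩⟨g, α⟩ < 0`. -/
def SepPt [Fintype B] (α f g : B → ℝ) : Prop := pair f α * pair g α < 0

/-- The hyperplane with root `α` separates the subsets `A, A'` of `V*`: every point of
`A ∪ A'` lies off the hyperplane, and every point of `A` is separated from every point
of `A'`. -/
def SepSets [Fintype B] (α : B → ℝ) (A A' : Set (B → ℝ)) : Prop :=
  (∀ f ∈ A ∪ A', pair f α ≠ 0) ∧ ∀ f ∈ A, ∀ g ∈ A', SepPt α f g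

/-- The subset `A ⊆ V*` lies entirely on one side of the hyperplane with root `α`. -/
def OneSide [Fintype B] (α : B → ℝ) (A : Set (B → ℝ)) : Prop :=
  (∀ f ∈ A, pair f α ≠ 0) ∧ ∀ f ∈ A, ∀ g ∈ A, ¬ SepPt α f g

/-- The hyperplane `H ∈ 𝔓` separates the subsets `A, A'` of `V*` (expressed via a
positive root `α` with `H = H_α`; this does not depend on the choice of `α`). -/
def SepSetsH [Fintype B] [DecidableEq B] (ρ : W →* (B → ℝ) ≃ₗ[ℝ] (B → ℝ))
    (H : Set (B → ℝ)) (A A' : Set (B → ℝ)) : Prop :=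
  ∃ α ∈ PhiPos (W := W) ρ, H = hyp α ∧ SepSets α A A'


/-- The open half-space bounded by the hyperplane with root `α` on the side not containing
the chamber `wC`. -/
def halfNeg [Fintype B] [DecidableEq B] (π : W →* (B → ℝ) ≃ₗ[ℝ] (B → ℝ)) (w : W)
    (α : B → ℝ) : Set (B → ℝ) :=
  {f | ∀ f₀ ∈ cham π w, pair f α * pair f₀ α < 0}

/-- Auxiliary recursion producing the sets `𝔄_i` (first component) together with the
cumulative unions `𝔄₀ ∪ ⋯ ∪ 𝔄_i` (second component), starting from `𝔄₀ = A0`: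
`𝔄_{i+1} = {P ∈ Q ∖ (𝔄₀ ∪ ⋯ ∪ 𝔄_i) : P ⩀ σ(R) = ∅ for some R ∈ 𝔄_i}`. -/
def AseqAux [Fintype B] [DecidableEq B] (π : W →* (B → ℝ) ≃ₗ[ℝ] (B → ℝ))
    (Q : Set (Set (B → ℝ))) (σ : W) (A0 : Set (Set (B → ℝ))) :
    ℕ → Set (Set (B → ℝ)) × Set (Set (B → ℝ))
  | 0 => (A0, A0)
  | i + 1 =>
    let prev := AseqAux π Q σ A0 i
    ({P | P ∈ Q ∧ P ∉ prev.2 ∧ ∃ R ∈ prev.1, dcap π P ((π σ) '' R) = ∅},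
      prev.2 ∪ {P | P ∈ Q ∧ P ∉ prev.2 ∧ ∃ R ∈ prev.1, dcap π P ((π σ) '' R) = ∅})

/-- The set `𝔄_i`. -/
def Aseq [Fintype B] [DecidableEq B] (π : W →* (B → ℝ) ≃ₗ[ℝ] (B → ℝ))
    (Q : Set (Set (B → ℝ))) (σ : W) (A0 : Set (Set (B → ℝ))) (i : ℕ) :
    Set (Set (B → ℝ)) :=
  (AseqAux π Q σ A0 i).1

section Words

variable {M : CoxeterMatrix B}

/-- The element `x′_n = x s₁ ⋯ ŝ_{i₁} ⋯ ŝ_{i_{n−1}} ⋯ s_{i_n − 1}`: the product of `x` and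
the first `i_n - 1` letters of the word `ω`, with the letters at positions `i₁, …, i_{n−1}`
omitted. (Positions are recorded `0`-based: the index `ι n : Fin ω.length` corresponds to
the letter `s_{i_{n+1}}` of the paper.) -/
def omitProd (cs : CoxeterSystem M W) (x : W) (ω : List B) {p : ℕ}
    (ι : Fin p → Fin ω.length) (n : Fin p) : W :=
  x * cs.wordProd (((List.finRange ω.length).filter
      (fun j : Fin ω.length => decide ((j : ℕ) < (ι n : ℕ) ∧ ∀ m : Fin p, m < n → j ≠ ι m))).map ω.get)

/-- The condition `ℓ(x′_n s_{i_n}) < ℓ(x′_n)` for all `n = 1, …, p`. -/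
def DescCond (cs : CoxeterSystem M W) (x : W) (ω : List B) {p : ℕ}
    (ι : Fin p → Fin ω.length) : Prop :=
  ∀ n : Fin p, cs.length (omitProd cs x ω ι n * cs.simple (ω.get (ι n))) <
    cs.length (omitProd cs x ω ι n)

/-- The element `x_n := x s₁ ⋯ s_{i_n − 1}`. -/
def xseq (cs : CoxeterSystem M W) (x : W) (ω : List B) {p : ℕ}
    (ι : Fin p → Fin ω.length) (n : Fin p) : W :=
  x * cs.wordProd (ω.take (ι n))

/-- The reflection `σ_n := x_n s_{i_n} x_n⁻¹`. -/
def sigmaseq (cs : CoxeterSystem M W) (x : W) (ω : List B) {p : ℕ}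
    (ι : Fin p → Fin ω.length) (n : Fin p) : W :=
  xseq cs x ω ι n * cs.simple (ω.get (ι n)) * (xseq cs x ω ι n)⁻¹

/-- The element `e_n := σ_n σ_{n−1} ⋯ σ₁`, with `e₀ = e`. -/
def eseq (cs : CoxeterSystem M W) (x : W) (ω : List B) {p : ℕ}
    (ι : Fin p → Fin ω.length) : ℕ → W
  | 0 => 1
  | n + 1 => (if h : n < p then sigmaseq cs x ω ι ⟨n, h⟩ else 1) * eseq cs x ω ι n

/-- A root of the hyperplane `H_n` corresponding to the reflection `σ_n`, namely
`x_n · α_{s_{i_n}}`. -/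
def rootseq [Fintype B] [DecidableEq B] (cs : CoxeterSystem M W)
    (ρ : W →* (B → ℝ) ≃ₗ[ℝ] (B → ℝ)) (x : W) (ω : List B) {p : ℕ}
    (ι : Fin p → Fin ω.length) (n : Fin p) : B → ℝ :=
  ρ (xseq cs x ω ι n) (sroot (ω.get (ι n)))

/-- The hyperplane `H_n ∈ 𝔓` corresponding to the reflection `σ_n`. -/
def Hseq [Fintype B] [DecidableEq B] (cs : CoxeterSystem M W)
    (ρ : W →* (B → ℝ) ≃ₗ[ℝ] (B → ℝ)) (x : W) (ω : List B) {p : ℕ}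
    (ι : Fin p → Fin ω.length) (n : Fin p) : Set (B → ℝ) :=
  hyp (rootseq cs ρ x ω ι n)

end Words

open CoxeterSystem

lemma cB_symm (M : CoxeterMatrix B) (i j : B) : cB M i j = cB M j i := by
  rw [cB, cB, M.symmetric]

lemma cB_self (M : CoxeterMatrix B) (i : B) : cB M i i = 1 := by
  simp [cB]

/-- `S_q = sin (qπ/m) / sin (π/m)`: the coordinates of the orbit of a simple root under the
dihedral subgroup `⟨s_i, s_j⟩` with `m = m(i,j)`. For `m = ∞`, encoded as `0`, it is the limit
value `q`. -/
def dihedralCoeff (m q : ℕ) : ℝ :=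
  if m = 0 then q else Real.sin (q * (Real.pi / m)) / Real.sin (Real.pi / m)

lemma dihedralCoeff_zero (m : ℕ) : dihedralCoeff m 0 = 0 := by
  simp [dihedralCoeff]

lemma dihedralCoeff_one {m : ℕ} (hm : m ≠ 1) : dihedralCoeff m 1 = 1 := by
  rcases Nat.eq_zero_or_pos m with rfl | hpos
  · simp [dihedralCoeff]
  have hsin : Real.sin (Real.pi / m) ≠ 0 := by
    refine (Real.sin_pos_of_pos_of_lt_pi (by positivity) ?_).ne'
    have : (2 : ℝ) ≤ m := by exact_mod_cast (show 2 ≤ m by omega)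
    rw [div_lt_iff₀ (by positivity)]
    nlinarith [Real.pi_pos]
  simp [dihedralCoeff, hpos.ne', hsin]

lemma dihedralCoeff_nonneg {m q : ℕ} (hq : m = 0 ∨ q ≤ m) : 0 ≤ dihedralCoeff m q := by
  rcases Nat.eq_zero_or_pos m with rfl | hpos
  · simp [dihedralCoeff]
  have hq : (q : ℝ) ≤ m := by exact_mod_cast hq.resolve_left hpos.ne'
  have hm : (1 : ℝ) ≤ m := by exact_mod_cast hpos
  rw [dihedralCoeff, if_neg hpos.ne']
  refine div_nonneg (Real.sin_nonneg_of_nonneg_of_le_pi (by positivity) ?_)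
    (Real.sin_nonneg_of_nonneg_of_le_pi (by positivity) ?_)
  · calc (q : ℝ) * (Real.pi / m) ≤ m * (Real.pi / m) := by gcongr
      _ = Real.pi := by field_simp
  · exact div_le_self Real.pi_pos.le hm

lemma dihedralCoeff_add_two (M : CoxeterMatrix B) (i j : B) (q : ℕ) :
    dihedralCoeff (M i j) (q + 2) =
      -2 * cB M i j * dihedralCoeff (M i j) (q + 1) - dihedralCoeff (M i j) q := by
  unfold dihedralCoeff cB
  split_ifs
  · push_cast; ring
  · set θ := Real.pi / (M i j : ℝ)
    have hsin : Real.sin ((q + 2 : ℕ) * θ) =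
        2 * Real.cos θ * Real.sin ((q + 1 : ℕ) * θ) - Real.sin (q * θ) := by
      have e1 : ((q + 2 : ℕ) : ℝ) * θ = ((q + 1 : ℕ) : ℝ) * θ + θ := by push_cast; ring
      have e2 : (q : ℝ) * θ = ((q + 1 : ℕ) : ℝ) * θ - θ := by push_cast; ring
      rw [e1, e2, Real.sin_add, Real.sin_sub]; ring
    rw [hsin]; ring

lemma pair_eq_dotProduct [Fintype B] (f v : B → ℝ) : pair f v = f ⬝ᵥ v := rfl

lemma pair_contraRep [Fintype B] {ρ π : W →* (B → ℝ) ≃ₗ[ℝ] (B → ℝ)} (hπ : IsContraRep ρ π)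
    (w : W) (f v : B → ℝ) : pair (π w f) v = pair f (ρ w⁻¹ v) := by
  have h := hπ w f (ρ w⁻¹ v)
  rwa [← LinearEquiv.mul_apply, ← map_mul, mul_inv_cancel, map_one, LinearEquiv.coe_one,
    id_eq] at h

section GeometricRepresentation

variable [Fintype B] [DecidableEq B] {M : CoxeterMatrix B} {cs : CoxeterSystem M W}
  {ρ : W →* (B → ℝ) ≃ₗ[ℝ] (B → ℝ)}

lemma pair_sroot (f : B → ℝ) (i : B) : pair f (sroot i) = f i := by
  simp [pair_eq_dotProduct, sroot]

lemma bform_sroot_sroot (M : CoxeterMatrix B) (i j : B) :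
    bform M (sroot i) (sroot j) = cB M i j := by
  simp [bform, sroot, Pi.single_apply]

lemma geomRep_simple_sroot (hρ : IsGeomRep M cs ρ) (i j : B) :
    ρ (cs.simple i) (sroot j) = sroot j - (2 * cB M i j) • sroot i := by
  rw [hρ, bform_sroot_sroot]

lemma geomRep_simple_sroot_self (hρ : IsGeomRep M cs ρ) (i : B) :
    ρ (cs.simple i) (sroot i) = -sroot i := by
  rw [geomRep_simple_sroot hρ, cB_self]; module

lemma geomRep_simple_smul_add (hρ : IsGeomRep M cs ρ) (i j : B) (a b : ℝ) :
    ρ (cs.simple i) (a • sroot i + b • sroot j) =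
      (-2 * cB M i j * b - a) • sroot i + b • sroot j := by
  rw [map_add, map_smul, map_smul, geomRep_simple_sroot_self hρ, geomRep_simple_sroot hρ]
  module

lemma geomRep_alternatingWord (hρ : IsGeomRep M cs ρ) {i j : B} (hij : i ≠ j) (k : ℕ) :
    ρ (cs.wordProd (alternatingWord i j k)) (sroot i) =
      dihedralCoeff (M i j) k • sroot (if Even k then j else i) +
        dihedralCoeff (M i j) (k + 1) • sroot (if Even k then i else j) := by
  induction k with
  | zero => simp [alternatingWord, dihedralCoeff_zero, dihedralCoeff_one (M.off_diagonal i j hij)]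
  | succ k ih =>
    rw [alternatingWord_succ', cs.wordProd_cons, map_mul, LinearEquiv.mul_apply, ih]
    by_cases hk : Even k
    · have hk' : ¬Even (k + 1) := by simp [Nat.even_add_one, hk]
      simp only [hk, hk', if_true, if_false]
      rw [geomRep_simple_smul_add hρ, cB_symm, dihedralCoeff_add_two]
      module
    · have hk' : Even (k + 1) := by simp [Nat.even_add_one, hk]
      simp only [hk, hk', if_true, if_false]
      rw [geomRep_simple_smul_add hρ, dihedralCoeff_add_two]
      module

end GeometricRepresentation

section RootPositivity

variable {M : CoxeterMatrix B} (cs : CoxeterSystem M W)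

lemma exists_eq_mul_alternatingWord (i j : B) (w : W) (hj : cs.IsRightDescent w j) :
    ∃ (w' : W) (k : ℕ), 0 < k ∧
      w = w' * cs.wordProd (alternatingWord i j k) ∧ cs.length w = cs.length w' + k ∧
      ¬cs.IsRightDescent w' i ∧ ¬cs.IsRightDescent w' j := by
  obtain ⟨n, hn⟩ : ∃ n, cs.length w = n := ⟨_, rfl⟩
  induction n generalizing w i j with
  | zero => exact absurd hj (by simp [cs.length_eq_zero_iff.mp hn, cs.not_isRightDescent_one])
  | succ n ih =>
    have hlen : cs.length (w * cs.simple j) + 1 = cs.length w := cs.isRightDescent_iff.mp hj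
    have hj' : ¬cs.IsRightDescent (w * cs.simple j) j :=
      cs.isRightDescent_iff_not_isRightDescent_mul.mp hj
    have hw : w = w * cs.simple j * cs.simple j := (cs.simple_mul_simple_cancel_right j).symm
    by_cases hi : cs.IsRightDescent (w * cs.simple j) i
    · obtain ⟨w', k, hk, heq, hlen', hj'', hi'⟩ := ih j i (w * cs.simple j) hi (by omega)
      refine ⟨w', k + 1, k.succ_pos, ?_, by omega, hi', hj''⟩
      rw [alternatingWord_succ, cs.wordProd_concat, ← mul_assoc, ← heq]
      exact hw
    · exact ⟨w * cs.simple j, 1, one_pos, by simp [alternatingWord], by omega, hi, hj'⟩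

lemma isReduced_of_length_mul_wordProd {w : W} {ω : List B}
    (h : cs.length (w * cs.wordProd ω) = cs.length w + ω.length) : cs.IsReduced ω := by
  have h₁ := cs.length_mul_le w (cs.wordProd ω)
  have h₂ := cs.length_wordProd_le ω
  exact le_antisymm h₂ (by omega)

lemma le_of_isReduced_alternatingWord {i j : B} {k : ℕ}
    (h : cs.IsReduced (alternatingWord i j k)) : M i j = 0 ∨ k ≤ M i j := by
  by_contra! hk
  exact cs.not_isReduced_alternatingWord i j hk.1 hk.2 h

variable [Fintype B] [DecidableEq B] {ρ : W →* (B → ℝ) ≃ₗ[ℝ] (B → ℝ)}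

lemma geomRep_sroot_nonneg (hρ : IsGeomRep M cs ρ) {w : W} {i : B}
    (hi : ¬cs.IsRightDescent w i) : 0 ≤ ρ w (sroot i) := by
  obtain ⟨n, hn⟩ : ∃ n, cs.length w = n := ⟨_, rfl⟩
  induction n using Nat.strong_induction_on generalizing w i with
  | _ n ih =>
    by_cases hw : w = 1
    · simp [hw, sroot]
    obtain ⟨j, hj⟩ := cs.exists_rightDescent_of_ne_one hw
    have hij : i ≠ j := by rintro rfl; exact hi hj
    obtain ⟨w', k, hk, rfl, hlen, hi', hj'⟩ := exists_eq_mul_alternatingWord cs i j w hj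
    have hred : cs.IsReduced (alternatingWord j i (k + 1)) := by
      apply isReduced_of_length_mul_wordProd cs (w := w')
      rw [length_alternatingWord, alternatingWord_succ, cs.wordProd_concat, ← mul_assoc,
        cs.not_isRightDescent_iff.mp hi, hlen, add_assoc]
    have hM : M i j = 0 ∨ k + 1 ≤ M i j :=
      M.symmetric i j ▸ le_of_isReduced_alternatingWord cs hred
    have hcoeff : ∀ q ≤ k + 1, 0 ≤ dihedralCoeff (M i j) q := fun q hq =>
      dihedralCoeff_nonneg (hM.imp_right hq.trans)
    have hroot : ∀ c, c = i ∨ c = j → 0 ≤ ρ w' (sroot c) := by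
      rintro c (rfl | rfl)
      exacts [ih _ (by omega) hi' rfl, ih _ (by omega) hj' rfl]
    rw [map_mul, LinearEquiv.mul_apply, geomRep_alternatingWord hρ hij, map_add, map_smul,
      map_smul]
    refine add_nonneg (smul_nonneg (hcoeff _ k.le_succ) (hroot _ ?_))
      (smul_nonneg (hcoeff _ le_rfl) (hroot _ ?_)) <;> split_ifs <;> simp

end RootPositivity

section Chambers

variable [Fintype B] [DecidableEq B] {M : CoxeterMatrix B} {cs : CoxeterSystem M W}
  {ρ π : W →* (B → ℝ) ≃ₗ[ℝ] (B → ℝ)}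

lemma pair_pos_of_mem_domCham {f v : B → ℝ} (hf : f ∈ domCham B) (hv : 0 ≤ v) (hv₀ : v ≠ 0) :
    0 < pair f v := by
  have hf' : ∀ b, 0 < f b := fun b => by simpa [pair_sroot] using hf b
  obtain ⟨b, hb⟩ := Function.ne_iff.mp hv₀
  exact Finset.sum_pos' (fun c _ => mul_nonneg (hf' c).le (hv c))
    ⟨b, Finset.mem_univ b, mul_pos (hf' b) (lt_of_le_of_ne (hv b) (Ne.symm hb))⟩

lemma pair_pos_of_mem_cham (hρ : IsGeomRep M cs ρ) (hπ : IsContraRep ρ π) {w v : W} {i : B}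
    (h : ¬cs.IsRightDescent (w⁻¹ * v) i) : ∀ f ∈ cham π w, 0 < pair f (ρ v (sroot i)) := by
  rintro _ ⟨f, hf, rfl⟩
  rw [pair_contraRep hπ, ← LinearEquiv.mul_apply, ← map_mul]
  refine pair_pos_of_mem_domCham hf (geomRep_sroot_nonneg cs hρ h) ?_
  simp [sroot]

lemma pair_neg_of_mem_cham (hρ : IsGeomRep M cs ρ) (hπ : IsContraRep ρ π) {w v : W} {i : B}
    (h : cs.IsRightDescent (w⁻¹ * v) i) : ∀ f ∈ cham π w, pair f (ρ v (sroot i)) < 0 := by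
  intro f hf
  have hv : ρ v (sroot i) = -ρ (v * cs.simple i) (sroot i) := by
    rw [map_mul, LinearEquiv.mul_apply, geomRep_simple_sroot_self hρ, map_neg, neg_neg]
  have h' : ¬cs.IsRightDescent (w⁻¹ * (v * cs.simple i)) i := by
    rw [← mul_assoc]
    exact cs.isRightDescent_iff_not_isRightDescent_mul.mp h
  rw [hv, pair_eq_dotProduct, dotProduct_neg, neg_lt_zero, ← pair_eq_dotProduct]
  exact pair_pos_of_mem_cham hρ hπ h' f hf

end Chambers

section ReducedWords

variable {M : CoxeterMatrix B} (cs : CoxeterSystem M W)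

lemma not_isRightDescent_of_isReduced_append_singleton {L : List B} {i : B}
    (h : cs.IsReduced (L ++ [i])) : ¬cs.IsRightDescent (cs.wordProd L) i := by
  have h₁ : cs.length (cs.wordProd L * cs.simple i) = L.length + 1 := by
    simpa [CoxeterSystem.IsReduced, cs.wordProd_append] using h
  have h₂ := cs.length_wordProd_le L
  unfold CoxeterSystem.IsRightDescent
  omega

lemma wordProd_take_inv_mul_wordProd_take (ω : List B) {a b : ℕ} (hab : a ≤ b) :
    (cs.wordProd (ω.take a))⁻¹ * cs.wordProd (ω.take b) = cs.wordProd ((ω.take b).drop a) := by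
  conv_lhs => rw [← List.take_append_drop a (ω.take b)]
  rw [List.take_take, min_eq_left hab, cs.wordProd_append, inv_mul_cancel_left]

lemma not_isRightDescent_wordProd_drop_take {ω : List B} (hω : cs.IsReduced ω) {a b : ℕ}
    (hab : a ≤ b) (hb : b < ω.length) :
    ¬cs.IsRightDescent (cs.wordProd ((ω.take b).drop a)) ω[b] := by
  apply not_isRightDescent_of_isReduced_append_singleton
  have hsplit : (ω.take b).drop a ++ [ω[b]] = (ω.take (b + 1)).drop a := by
    rw [List.take_add_one, List.getElem?_eq_getElem hb,
      List.drop_append_of_le_length (by simp; omega)]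
    rfl
  rw [hsplit]
  exact (hω.take _).drop _

end ReducedWords

/-- for `1 ≤ n ≤ p`, the chambers `x₁C` and `x_nC` lie on the same side of
`H_n`, while `H_n` separates `x₁C` and `x_n s_{i_n} C`. -/
theorem statement11 [Fintype B] [DecidableEq B] {M : CoxeterMatrix B}
    (cs : CoxeterSystem M W) (ρ π : W →* (B → ℝ) ≃ₗ[ℝ] (B → ℝ))
    (hρ : IsGeomRep M cs ρ) (hπ : IsContraRep ρ π)
    (x : W) (ω : List B) (hred : cs.IsReduced ω)
    (p : ℕ) (ι : Fin p → Fin ω.length) (hι : StrictMono ι)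
    (n : ℕ) (hn1 : 1 ≤ n) (hnp : n ≤ p) :
    (∀ f ∈ cham π (xseq cs x ω ι ⟨0, by omega⟩),
      ∀ g ∈ cham π (xseq cs x ω ι ⟨n - 1, by omega⟩),
        ¬ SepPt (rootseq cs ρ x ω ι ⟨n - 1, by omega⟩) f g) ∧
    SepSets (rootseq cs ρ x ω ι ⟨n - 1, by omega⟩)
      (cham π (xseq cs x ω ι ⟨0, by omega⟩))
      (cham π (xseq cs x ω ι ⟨n - 1, by omega⟩ *
        cs.simple (ω.get (ι ⟨n - 1, by omega⟩)))) := by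
  set x₁ := xseq cs x ω ι ⟨0, by omega⟩
  set xₙ := xseq cs x ω ι ⟨n - 1, by omega⟩
  set j := ω.get (ι ⟨n - 1, by omega⟩)
  have hx₁ : ¬cs.IsRightDescent (x₁⁻¹ * xₙ) j := by
    have hle : (ι ⟨0, by omega⟩ : ℕ) ≤ ι ⟨n - 1, by omega⟩ :=
      hι.monotone (Fin.mk_le_mk.mpr (by omega))
    simp only [x₁, xₙ, xseq, mul_inv_rev, mul_assoc, inv_mul_cancel_left]
    rw [wordProd_take_inv_mul_wordProd_take cs ω hle]
    exact not_isRightDescent_wordProd_drop_take cs hred hle (ι _).isLt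
  have hxₙ : ¬cs.IsRightDescent (xₙ⁻¹ * xₙ) j := by
    simp [cs.not_isRightDescent_one]
  have hxₙs : cs.IsRightDescent ((xₙ * cs.simple j)⁻¹ * xₙ) j := by
    simp [CoxeterSystem.IsRightDescent]
  have hpos₁ := pair_pos_of_mem_cham hρ hπ hx₁
  have hposₙ := pair_pos_of_mem_cham hρ hπ hxₙ
  have hnegₙ := pair_neg_of_mem_cham hρ hπ hxₙs
  refine ⟨fun f hf g hg => (mul_pos (hpos₁ f hf) (hposₙ g hg)).asymm, ?_,
    fun f hf g hg => mul_neg_of_pos_of_neg (hpos₁ f hf) (hnegₙ g hg)⟩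
  rintro f (hf | hf)
  exacts [(hpos₁ f hf).ne', (hnegₙ f hf).ne]

end PaperBound
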